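/- Let T be a Lie-Yamaguti algebra over a field k of characteristic zero, and let (F,G), (F',G') ∈ C²(T,T)×C³(T,T) both be (2,3)-cocycles with respect to the regular representation (i.e., δ_I, δ_II, δ*_I, δ*_II applied to each pair vanish). Then the pair ((F,G)⋆(F',G') + (F',G')⋆(F,G), G△G' + G'△G) is a (4,5)-cocycle with respect to the regular representation: δ_I and δ_II of this pair (at the (4,5) level) both vanish. -/
import Mathlib


structure LieYamaguti (k T : Type*) [Field k] [CharZero k] [AddCommGroup T] [Module k T] where
  mul : T →ₗ[k] T →ₗ[k] T
  tri : T →ₗ[k] T →ₗ[k] T →ₗ[k] T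
  ly1 : ∀ a : T, mul a a = 0
  ly2 : ∀ a b : T, tri a a b = 0
  ly3 : ∀ a b c : T, tri a b c + tri b c a + tri c a b
      + mul (mul a b) c + mul (mul b c) a + mul (mul c a) b = 0
  ly4 : ∀ a b c d : T, tri (mul a b) c d + tri (mul b c) a d + tri (mul c a) b d = 0
  ly5 : ∀ a b c d : T, tri a b (mul c d) = mul (tri a b c) d + mul c (tri a b d)
  ly6 : ∀ a b c d e : T, tri a b (tri c d e)
      = tri (tri a b c) d e + tri c (tri a b d) e + tri c d (tri a b e)

/-- `f : T × T → V` is bilinear. -/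
def IsBilin (k : Type*) {T V : Type*} [Field k] [AddCommGroup T] [Module k T]
    [AddCommGroup V] [Module k V] (f : T → T → V) : Prop :=
  (∀ b, IsLinearMap k (fun a => f a b)) ∧ (∀ a, IsLinearMap k (fun b => f a b))

/-- `g : T × T × T → V` is trilinear. -/
def IsTrilin (k : Type*) {T V : Type*} [Field k] [AddCommGroup T] [Module k T]
    [AddCommGroup V] [Module k V] (g : T → T → T → V) : Prop :=
  (∀ b c, IsLinearMap k (fun a => g a b c)) ∧ (∀ a c, IsLinearMap k (fun b => g a b c)) ∧
  (∀ a b, IsLinearMap k (fun c => g a b c))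

variable {k T : Type*} [Field k] [CharZero k] [AddCommGroup T] [Module k T]

/-- `δ_I(f,g)`, with respect to the regular representation. -/
def rdI (L : LieYamaguti k T) (f : T → T → T) (g : T → T → T → T) (a b c d : T) : T :=
  - L.mul c (g a b d) + L.mul d (g a b c) + g a b (L.mul c d)
    + L.tri a b (f c d) - f (L.tri a b c) d - f c (L.tri a b d)

/-- `δ_II(f,g)`, with respect to the regular representation. -/
def rdII (L : LieYamaguti k T) (_f : T → T → T) (g : T → T → T → T) (a b c d e : T) : T :=
  - L.tri (g a b c) d e + L.tri (g a b d) c e + L.tri a b (g c d e) - L.tri c d (g a b e)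
    + g a b (L.tri c d e) - g (L.tri a b c) d e - g c (L.tri a b d) e - g c d (L.tri a b e)

/-- `δ*_I(f,g)`, with respect to the regular representation. -/
def rdsI (L : LieYamaguti k T) (f : T → T → T) (g : T → T → T → T) (a b c : T) : T :=
  - L.mul a (f b c) - L.mul b (f c a) - L.mul c (f a b)
    + f (L.mul a b) c + f (L.mul b c) a + f (L.mul c a) b
    + g a b c + g b c a + g c a b

/-- `δ*_II(f,g)`, with respect to the regular representation. -/
def rdsII (L : LieYamaguti k T) (f : T → T → T) (g : T → T → T → T) (a b c d : T) : T :=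
  L.tri (f b c) a d + L.tri (f c a) b d + L.tri (f a b) c d
    + g (L.mul a b) c d + g (L.mul b c) a d + g (L.mul c a) b d

/-- `δ_I(𝐹,𝐺)` at the (4,5)-level, with respect to the regular representation. -/
def rd45I (L : LieYamaguti k T) (F : T → T → T → T → T) (G : T → T → T → T → T → T)
    (x1 x2 x3 x4 x5 x6 : T) : T :=
  L.mul x5 (G x1 x2 x3 x4 x6) - L.mul x6 (G x1 x2 x3 x4 x5) - G x1 x2 x3 x4 (L.mul x5 x6)
    + L.tri x1 x2 (F x3 x4 x5 x6) - L.tri x3 x4 (F x1 x2 x5 x6)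
    - F (L.tri x1 x2 x3) x4 x5 x6 - F x3 (L.tri x1 x2 x4) x5 x6
    - F x3 x4 (L.tri x1 x2 x5) x6 - F x3 x4 x5 (L.tri x1 x2 x6)
    + F x1 x2 (L.tri x3 x4 x5) x6 + F x1 x2 x5 (L.tri x3 x4 x6)

/-- `δ_II(𝐹,𝐺)` at the (4,5)-level, with respect to the regular representation. -/
def rd45II (L : LieYamaguti k T) (_F : T → T → T → T → T) (G : T → T → T → T → T → T)
    (x1 x2 x3 x4 x5 x6 x7 : T) : T :=
  L.tri (G x1 x2 x3 x4 x5) x6 x7 - L.tri (G x1 x2 x3 x4 x6) x5 x7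
    + L.tri x1 x2 (G x3 x4 x5 x6 x7) - L.tri x3 x4 (G x1 x2 x5 x6 x7)
    + L.tri x5 x6 (G x1 x2 x3 x4 x7)
    - G (L.tri x1 x2 x3) x4 x5 x6 x7 - G x3 (L.tri x1 x2 x4) x5 x6 x7
    - G x3 x4 (L.tri x1 x2 x5) x6 x7 - G x3 x4 x5 (L.tri x1 x2 x6) x7
    - G x3 x4 x5 x6 (L.tri x1 x2 x7)
    + G x1 x2 (L.tri x3 x4 x5) x6 x7 + G x1 x2 x5 (L.tri x3 x4 x6) x7
    + G x1 x2 x5 x6 (L.tri x3 x4 x7) - G x1 x2 x3 x4 (L.tri x5 x6 x7)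

/-- The operation `(F,G) ⋆ (F',G')`. -/
def starOp (F : T → T → T) (G : T → T → T → T) (F' : T → T → T) (G' : T → T → T → T)
    (a b c d : T) : T :=
  G a b (F' c d) - F (G' a b c) d - F c (G' a b d)

/-- The operation `G △ G'`. -/
def triOp (G G' : T → T → T → T) (a b c d e : T) : T :=
  G a b (G' c d e) - G (G' a b c) d e - G c (G' a b d) e - G c d (G' a b e)

set_option maxHeartbeats 4000000 in
/-- If `(F,G)` and `(F',G')` are (2,3)-cocycles with respect to the regular representation,
then `((F,G)⋆(F',G') + (F',G')⋆(F,G), G△G' + G'△G)` is a (4,5)-cocycle. -/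
theorem star_of_cocycles_is_cocycle (L : LieYamaguti k T)
    (F F' : T → T → T) (G G' : T → T → T → T)
    (hF : IsBilin k F) (hFalt : ∀ a : T, F a a = 0)
    (hG : IsTrilin k G) (hGalt : ∀ a b : T, G a a b = 0)
    (hF' : IsBilin k F') (hF'alt : ∀ a : T, F' a a = 0)
    (hG' : IsTrilin k G') (hG'alt : ∀ a b : T, G' a a b = 0)
    (hc1 : ∀ a b c d : T, rdI L F G a b c d = 0)
    (hc2 : ∀ a b c d e : T, rdII L F G a b c d e = 0)
    (hc3 : ∀ a b c : T, rdsI L F G a b c = 0)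
    (hc4 : ∀ a b c d : T, rdsII L F G a b c d = 0)
    (hc1' : ∀ a b c d : T, rdI L F' G' a b c d = 0)
    (hc2' : ∀ a b c d e : T, rdII L F' G' a b c d e = 0)
    (hc3' : ∀ a b c : T, rdsI L F' G' a b c = 0)
    (hc4' : ∀ a b c d : T, rdsII L F' G' a b c d = 0) :
    (∀ x1 x2 x3 x4 x5 x6 : T,
      rd45I L (fun a b c d => starOp F G F' G' a b c d + starOp F' G' F G a b c d)
        (fun a b c d e => triOp G G' a b c d e + triOp G' G a b c d e) x1 x2 x3 x4 x5 x6 = 0) ∧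
    (∀ x1 x2 x3 x4 x5 x6 x7 : T,
      rd45II L (fun a b c d => starOp F G F' G' a b c d + starOp F' G' F G a b c d)
        (fun a b c d e => triOp G G' a b c d e + triOp G' G a b c d e) x1 x2 x3 x4 x5 x6 x7 = 0) := by
  -- antisymmetry lemmas
  have hanti_m : ∀ a b : T, L.mul a b + L.mul b a = 0 := by
    intro a b
    have h1 := L.ly1 (a + b)
    simp only [map_add, LinearMap.add_apply, L.ly1, zero_add, add_zero] at h1
    first
    | exact h1
    | (rw [add_comm] at h1; exact h1)
  have hanti_t : ∀ a b c : T, L.tri a b c + L.tri b a c = 0 := by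
    intro a b c
    have h1 := L.ly2 (a + b) c
    simp only [map_add, LinearMap.add_apply, L.ly2, zero_add, add_zero] at h1
    first
    | exact h1
    | (rw [add_comm] at h1; exact h1)
  have hanti_F : ∀ a b : T, F a b + F b a = 0 := by
    intro a b
    have h1 := hFalt (a + b)
    have e1 : F (a + b) (a + b) = F a (a + b) + F b (a + b) := (hF.1 (a + b)).map_add a b
    have e2 : F a (a + b) = F a a + F a b := (hF.2 a).map_add a b
    have e3 : F b (a + b) = F b a + F b b := (hF.2 b).map_add a b
    rw [e1, e2, e3, hFalt a, hFalt b, zero_add, add_zero] at h1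
    exact h1
  have hanti_F' : ∀ a b : T, F' a b + F' b a = 0 := by
    intro a b
    have h1 := hF'alt (a + b)
    have e1 : F' (a + b) (a + b) = F' a (a + b) + F' b (a + b) := (hF'.1 (a + b)).map_add a b
    have e2 : F' a (a + b) = F' a a + F' a b := (hF'.2 a).map_add a b
    have e3 : F' b (a + b) = F' b a + F' b b := (hF'.2 b).map_add a b
    rw [e1, e2, e3, hF'alt a, hF'alt b, zero_add, add_zero] at h1
    exact h1
  have hanti_G : ∀ a b c : T, G a b c + G b a c = 0 := by
    intro a b c
    have h1 := hGalt (a + b) c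
    have e1 : G (a + b) (a + b) c = G a (a + b) c + G b (a + b) c := (hG.1 (a + b) c).map_add a b
    have e2 : G a (a + b) c = G a a c + G a b c := (hG.2.1 a c).map_add a b
    have e3 : G b (a + b) c = G b a c + G b b c := (hG.2.1 b c).map_add a b
    rw [e1, e2, e3, hGalt a c, hGalt b c, zero_add, add_zero] at h1
    exact h1
  have hanti_G' : ∀ a b c : T, G' a b c + G' b a c = 0 := by
    intro a b c
    have h1 := hG'alt (a + b) c
    have e1 : G' (a + b) (a + b) c = G' a (a + b) c + G' b (a + b) c := (hG'.1 (a + b) c).map_add a b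
    have e2 : G' a (a + b) c = G' a a c + G' a b c := (hG'.2.1 a c).map_add a b
    have e3 : G' b (a + b) c = G' b a c + G' b b c := (hG'.2.1 b c).map_add a b
    rw [e1, e2, e3, hG'alt a c, hG'alt b c, zero_add, add_zero] at h1
    exact h1
  have hFa0 : ∀ x y b, F (x + y) b = F x b + F y b := fun x y b => (hF.1 b).map_add x y
  have hFs0 : ∀ x y b, F (x - y) b = F x b - F y b := fun x y b => (hF.1 b).map_sub x y
  have hFn0 : ∀ x b, F (-x) b = - (F x b) := fun x b => (hF.1 b).map_neg x
  have hFz0 : ∀ b, F 0 b = 0 := fun b => (hF.1 b).map_zero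
  have hFa1 : ∀ x y a, F a (x + y) = F a x + F a y := fun x y a => (hF.2 a).map_add x y
  have hFs1 : ∀ x y a, F a (x - y) = F a x - F a y := fun x y a => (hF.2 a).map_sub x y
  have hFn1 : ∀ x a, F a (-x) = - (F a x) := fun x a => (hF.2 a).map_neg x
  have hFz1 : ∀ a, F a 0 = 0 := fun a => (hF.2 a).map_zero
  have hF'a0 : ∀ x y b, F' (x + y) b = F' x b + F' y b := fun x y b => (hF'.1 b).map_add x y
  have hF's0 : ∀ x y b, F' (x - y) b = F' x b - F' y b := fun x y b => (hF'.1 b).map_sub x y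
  have hF'n0 : ∀ x b, F' (-x) b = - (F' x b) := fun x b => (hF'.1 b).map_neg x
  have hF'z0 : ∀ b, F' 0 b = 0 := fun b => (hF'.1 b).map_zero
  have hF'a1 : ∀ x y a, F' a (x + y) = F' a x + F' a y := fun x y a => (hF'.2 a).map_add x y
  have hF's1 : ∀ x y a, F' a (x - y) = F' a x - F' a y := fun x y a => (hF'.2 a).map_sub x y
  have hF'n1 : ∀ x a, F' a (-x) = - (F' a x) := fun x a => (hF'.2 a).map_neg x
  have hF'z1 : ∀ a, F' a 0 = 0 := fun a => (hF'.2 a).map_zero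
  have hGa0 : ∀ x y b c, G (x + y) b c = G x b c + G y b c := fun x y b c => (hG.1 b c).map_add x y
  have hGs0 : ∀ x y b c, G (x - y) b c = G x b c - G y b c := fun x y b c => (hG.1 b c).map_sub x y
  have hGn0 : ∀ x b c, G (-x) b c = - (G x b c) := fun x b c => (hG.1 b c).map_neg x
  have hGz0 : ∀ b c, G 0 b c = 0 := fun b c => (hG.1 b c).map_zero
  have hGa1 : ∀ x y a c, G a (x + y) c = G a x c + G a y c := fun x y a c => (hG.2.1 a c).map_add x y
  have hGs1 : ∀ x y a c, G a (x - y) c = G a x c - G a y c := fun x y a c => (hG.2.1 a c).map_sub x y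
  have hGn1 : ∀ x a c, G a (-x) c = - (G a x c) := fun x a c => (hG.2.1 a c).map_neg x
  have hGz1 : ∀ a c, G a 0 c = 0 := fun a c => (hG.2.1 a c).map_zero
  have hGa2 : ∀ x y a b, G a b (x + y) = G a b x + G a b y := fun x y a b => (hG.2.2 a b).map_add x y
  have hGs2 : ∀ x y a b, G a b (x - y) = G a b x - G a b y := fun x y a b => (hG.2.2 a b).map_sub x y
  have hGn2 : ∀ x a b, G a b (-x) = - (G a b x) := fun x a b => (hG.2.2 a b).map_neg x
  have hGz2 : ∀ a b, G a b 0 = 0 := fun a b => (hG.2.2 a b).map_zero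
  have hG'a0 : ∀ x y b c, G' (x + y) b c = G' x b c + G' y b c := fun x y b c => (hG'.1 b c).map_add x y
  have hG's0 : ∀ x y b c, G' (x - y) b c = G' x b c - G' y b c := fun x y b c => (hG'.1 b c).map_sub x y
  have hG'n0 : ∀ x b c, G' (-x) b c = - (G' x b c) := fun x b c => (hG'.1 b c).map_neg x
  have hG'z0 : ∀ b c, G' 0 b c = 0 := fun b c => (hG'.1 b c).map_zero
  have hG'a1 : ∀ x y a c, G' a (x + y) c = G' a x c + G' a y c := fun x y a c => (hG'.2.1 a c).map_add x y
  have hG's1 : ∀ x y a c, G' a (x - y) c = G' a x c - G' a y c := fun x y a c => (hG'.2.1 a c).map_sub x y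
  have hG'n1 : ∀ x a c, G' a (-x) c = - (G' a x c) := fun x a c => (hG'.2.1 a c).map_neg x
  have hG'z1 : ∀ a c, G' a 0 c = 0 := fun a c => (hG'.2.1 a c).map_zero
  have hG'a2 : ∀ x y a b, G' a b (x + y) = G' a b x + G' a b y := fun x y a b => (hG'.2.2 a b).map_add x y
  have hG's2 : ∀ x y a b, G' a b (x - y) = G' a b x - G' a b y := fun x y a b => (hG'.2.2 a b).map_sub x y
  have hG'n2 : ∀ x a b, G' a b (-x) = - (G' a b x) := fun x a b => (hG'.2.2 a b).map_neg x
  have hG'z2 : ∀ a b, G' a b 0 = 0 := fun a b => (hG'.2.2 a b).map_zero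
  refine ⟨?_, ?_⟩
  · intro x1 x2 x3 x4 x5 x6
    have hI0 : (rdI L F' G' x1 x2 x5 (G x3 x4 x6)) = 0 := hc1' x1 x2 x5 (G x3 x4 x6)
    have hI1 : (rdI L F' G' x1 x2 x6 (G x3 x4 x5)) = 0 := hc1' x1 x2 x6 (G x3 x4 x5)
    have hI2 : (rdI L F' G' x3 x4 x5 (G x1 x2 x6)) = 0 := hc1' x3 x4 x5 (G x1 x2 x6)
    have hI3 : (rdI L F' G' x3 x4 x6 (G x1 x2 x5)) = 0 := hc1' x3 x4 x6 (G x1 x2 x5)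
    have hI4 : (rdI L F' G' x3 (G x1 x2 x4) x5 x6) = 0 := hc1' x3 (G x1 x2 x4) x5 x6
    have hI5 : (rdI L F' G' (G x1 x2 x3) x4 x5 x6) = 0 := hc1' (G x1 x2 x3) x4 x5 x6
    have hI6 : (rdII L F' G' x1 x2 x3 x4 (F x5 x6)) = 0 := hc2' x1 x2 x3 x4 (F x5 x6)
    have hI7 : (F x6 (L.tri x3 (G' x1 x2 x4) x5) + F (L.tri x3 (G' x1 x2 x4) x5) x6) = 0 := hanti_F x6 (L.tri x3 (G' x1 x2 x4) x5)
    have hI8 : (F (G' x1 x2 x5) (L.tri x3 x4 x6) + F (L.tri x3 x4 x6) (G' x1 x2 x5)) = 0 := hanti_F (G' x1 x2 x5) (L.tri x3 x4 x6)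
    have hI9 : (F (G' x1 x2 (L.tri x3 x4 x5)) x6 + F x6 (G' x1 x2 (L.tri x3 x4 x5))) = 0 := hanti_F (G' x1 x2 (L.tri x3 x4 x5)) x6
    have hI10 : (F (G' x3 x4 x5) (L.tri x1 x2 x6) + F (L.tri x1 x2 x6) (G' x3 x4 x5)) = 0 := hanti_F (G' x3 x4 x5) (L.tri x1 x2 x6)
    have hI11 : (F (G' x3 x4 (L.tri x1 x2 x5)) x6 + F x6 (G' x3 x4 (L.tri x1 x2 x5))) = 0 := hanti_F (G' x3 x4 (L.tri x1 x2 x5)) x6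
    have hI12 : (F (G' x3 (L.tri x1 x2 x4) x5) x6 + F x6 (G' x3 (L.tri x1 x2 x4) x5)) = 0 := hanti_F (G' x3 (L.tri x1 x2 x4) x5) x6
    have hI13 : (F (G' (L.tri x1 x2 x3) x4 x5) x6 + F x6 (G' (L.tri x1 x2 x3) x4 x5)) = 0 := hanti_F (G' (L.tri x1 x2 x3) x4 x5) x6
    have hI14 : (F (L.tri (G' x1 x2 x3) x4 x5) x6 + F x6 (L.tri (G' x1 x2 x3) x4 x5)) = 0 := hanti_F (L.tri (G' x1 x2 x3) x4 x5) x6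
    have hI15 : (F' x6 (L.tri x3 (G x1 x2 x4) x5) + F' (L.tri x3 (G x1 x2 x4) x5) x6) = 0 := hanti_F' x6 (L.tri x3 (G x1 x2 x4) x5)
    have hI16 : (F' (G x1 x2 x5) (L.tri x3 x4 x6) + F' (L.tri x3 x4 x6) (G x1 x2 x5)) = 0 := hanti_F' (G x1 x2 x5) (L.tri x3 x4 x6)
    have hI17 : (F' (G x1 x2 (L.tri x3 x4 x5)) x6 + F' x6 (G x1 x2 (L.tri x3 x4 x5))) = 0 := hanti_F' (G x1 x2 (L.tri x3 x4 x5)) x6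
    have hI18 : (F' (G x3 x4 x5) (L.tri x1 x2 x6) + F' (L.tri x1 x2 x6) (G x3 x4 x5)) = 0 := hanti_F' (G x3 x4 x5) (L.tri x1 x2 x6)
    have hI19 : (F' (G x3 x4 (L.tri x1 x2 x5)) x6 + F' x6 (G x3 x4 (L.tri x1 x2 x5))) = 0 := hanti_F' (G x3 x4 (L.tri x1 x2 x5)) x6
    have hI20 : (F' (G x3 (L.tri x1 x2 x4) x5) x6 + F' x6 (G x3 (L.tri x1 x2 x4) x5)) = 0 := hanti_F' (G x3 (L.tri x1 x2 x4) x5) x6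
    have hI21 : (F' (G (L.tri x1 x2 x3) x4 x5) x6 + F' x6 (G (L.tri x1 x2 x3) x4 x5)) = 0 := hanti_F' (G (L.tri x1 x2 x3) x4 x5) x6
    have hI22 : (F' (L.tri (G x1 x2 x3) x4 x5) x6 + F' x6 (L.tri (G x1 x2 x3) x4 x5)) = 0 := hanti_F' (L.tri (G x1 x2 x3) x4 x5) x6
    have hI23 : (L.mul (G x1 x2 x5) (G' x3 x4 x6) + L.mul (G' x3 x4 x6) (G x1 x2 x5)) = 0 := hanti_m (G x1 x2 x5) (G' x3 x4 x6)
    have hI24 : (L.mul (G x1 x2 x6) (G' x3 x4 x5) + L.mul (G' x3 x4 x5) (G x1 x2 x6)) = 0 := hanti_m (G x1 x2 x6) (G' x3 x4 x5)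
    have hI25 : (L.mul (G x3 x4 x5) (G' x1 x2 x6) + L.mul (G' x1 x2 x6) (G x3 x4 x5)) = 0 := hanti_m (G x3 x4 x5) (G' x1 x2 x6)
    have hI26 : (L.mul (G x3 x4 x6) (G' x1 x2 x5) + L.mul (G' x1 x2 x5) (G x3 x4 x6)) = 0 := hanti_m (G x3 x4 x6) (G' x1 x2 x5)
    have hI27 : (L.tri x3 (G x1 x2 x4) (F' x5 x6) + L.tri (G x1 x2 x4) x3 (F' x5 x6)) = 0 := hanti_t x3 (G x1 x2 x4) (F' x5 x6)
    have hI28 : (L.tri (G' x1 x2 x4) x3 (F x5 x6) + L.tri x3 (G' x1 x2 x4) (F x5 x6)) = 0 := hanti_t (G' x1 x2 x4) x3 (F x5 x6)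
    have hI29 : (rdI L F G x1 x2 x5 (G' x3 x4 x6)) = 0 := hc1 x1 x2 x5 (G' x3 x4 x6)
    have hI30 : (rdI L F G x1 x2 x6 (G' x3 x4 x5)) = 0 := hc1 x1 x2 x6 (G' x3 x4 x5)
    have hI31 : (rdI L F G x3 x4 x5 (G' x1 x2 x6)) = 0 := hc1 x3 x4 x5 (G' x1 x2 x6)
    have hI32 : (rdI L F G x3 x4 x6 (G' x1 x2 x5)) = 0 := hc1 x3 x4 x6 (G' x1 x2 x5)
    have hI33 : (rdI L F G x3 (G' x1 x2 x4) x5 x6) = 0 := hc1 x3 (G' x1 x2 x4) x5 x6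
    have hI34 : (rdI L F G (G' x1 x2 x3) x4 x5 x6) = 0 := hc1 (G' x1 x2 x3) x4 x5 x6
    have hI35 : (rdII L F G x1 x2 x3 x4 (F' x5 x6)) = 0 := hc2 x1 x2 x3 x4 (F' x5 x6)
    have hI36 : (F x5 (rdII L F' G' x1 x2 x3 x4 x6)) = 0 := by
      rw [hc2' x1 x2 x3 x4 x6]
      simp only [map_zero, LinearMap.map_zero, LinearMap.zero_apply, hFz0, hFz1, hF'z0, hF'z1, hGz0, hGz1, hGz2, hG'z0, hG'z1, hG'z2]
    have hI37 : (F x6 (rdII L F' G' x1 x2 x3 x4 x5)) = 0 := by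
      rw [hc2' x1 x2 x3 x4 x5]
      simp only [map_zero, LinearMap.map_zero, LinearMap.zero_apply, hFz0, hFz1, hF'z0, hF'z1, hGz0, hGz1, hGz2, hG'z0, hG'z1, hG'z2]
    have hI38 : (F x5 (L.tri (G' x1 x2 x4) x3 x6 + L.tri x3 (G' x1 x2 x4) x6)) = 0 := by
      rw [hanti_t (G' x1 x2 x4) x3 x6]
      simp only [map_zero, LinearMap.map_zero, LinearMap.zero_apply, hFz0, hFz1, hF'z0, hF'z1, hGz0, hGz1, hGz2, hG'z0, hG'z1, hG'z2]
    have hI39 : (F x6 (L.tri x3 (G' x1 x2 x4) x5 + L.tri (G' x1 x2 x4) x3 x5)) = 0 := by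
      rw [hanti_t x3 (G' x1 x2 x4) x5]
      simp only [map_zero, LinearMap.map_zero, LinearMap.zero_apply, hFz0, hFz1, hF'z0, hF'z1, hGz0, hGz1, hGz2, hG'z0, hG'z1, hG'z2]
    have hI40 : (F' x5 (L.tri x3 (G x1 x2 x4) x6 + L.tri (G x1 x2 x4) x3 x6)) = 0 := by
      rw [hanti_t x3 (G x1 x2 x4) x6]
      simp only [map_zero, LinearMap.map_zero, LinearMap.zero_apply, hFz0, hFz1, hF'z0, hF'z1, hGz0, hGz1, hGz2, hG'z0, hG'z1, hG'z2]
    have hI41 : (F' x6 (L.tri x3 (G x1 x2 x4) x5 + L.tri (G x1 x2 x4) x3 x5)) = 0 := by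
      rw [hanti_t x3 (G x1 x2 x4) x5]
      simp only [map_zero, LinearMap.map_zero, LinearMap.zero_apply, hFz0, hFz1, hF'z0, hF'z1, hGz0, hGz1, hGz2, hG'z0, hG'z1, hG'z2]
    have hI42 : (F' x5 (rdII L F G x1 x2 x3 x4 x6)) = 0 := by
      rw [hc2 x1 x2 x3 x4 x6]
      simp only [map_zero, LinearMap.map_zero, LinearMap.zero_apply, hFz0, hFz1, hF'z0, hF'z1, hGz0, hGz1, hGz2, hG'z0, hG'z1, hG'z2]
    have hI43 : (F' x6 (rdII L F G x1 x2 x3 x4 x5)) = 0 := by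
      rw [hc2 x1 x2 x3 x4 x5]
      simp only [map_zero, LinearMap.map_zero, LinearMap.zero_apply, hFz0, hFz1, hF'z0, hF'z1, hGz0, hGz1, hGz2, hG'z0, hG'z1, hG'z2]
    have hI44 : (G x1 x2 (rdI L F' G' x3 x4 x5 x6)) = 0 := by
      rw [hc1' x3 x4 x5 x6]
      simp only [map_zero, LinearMap.map_zero, LinearMap.zero_apply, hFz0, hFz1, hF'z0, hF'z1, hGz0, hGz1, hGz2, hG'z0, hG'z1, hG'z2]
    have hI45 : (G x3 x4 (rdI L F' G' x1 x2 x5 x6)) = 0 := by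
      rw [hc1' x1 x2 x5 x6]
      simp only [map_zero, LinearMap.map_zero, LinearMap.zero_apply, hFz0, hFz1, hF'z0, hF'z1, hGz0, hGz1, hGz2, hG'z0, hG'z1, hG'z2]
    have hI46 : (G' x1 x2 (rdI L F G x3 x4 x5 x6)) = 0 := by
      rw [hc1 x3 x4 x5 x6]
      simp only [map_zero, LinearMap.map_zero, LinearMap.zero_apply, hFz0, hFz1, hF'z0, hF'z1, hGz0, hGz1, hGz2, hG'z0, hG'z1, hG'z2]
    have hI47 : (G' x3 x4 (rdI L F G x1 x2 x5 x6)) = 0 := by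
      rw [hc1 x1 x2 x5 x6]
      simp only [map_zero, LinearMap.map_zero, LinearMap.zero_apply, hFz0, hFz1, hF'z0, hF'z1, hGz0, hGz1, hGz2, hG'z0, hG'z1, hG'z2]
    have hI48 : (L.tri x1 x2 (F (G' x3 x4 x5) x6 + F x6 (G' x3 x4 x5))) = 0 := by
      rw [hanti_F (G' x3 x4 x5) x6]
      simp only [map_zero, LinearMap.map_zero, LinearMap.zero_apply, hFz0, hFz1, hF'z0, hF'z1, hGz0, hGz1, hGz2, hG'z0, hG'z1, hG'z2]
    have hI49 : (L.tri x3 x4 (F (G' x1 x2 x5) x6 + F x6 (G' x1 x2 x5))) = 0 := by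
      rw [hanti_F (G' x1 x2 x5) x6]
      simp only [map_zero, LinearMap.map_zero, LinearMap.zero_apply, hFz0, hFz1, hF'z0, hF'z1, hGz0, hGz1, hGz2, hG'z0, hG'z1, hG'z2]
    have hI50 : (L.tri x1 x2 (F' (G x3 x4 x5) x6 + F' x6 (G x3 x4 x5))) = 0 := by
      rw [hanti_F' (G x3 x4 x5) x6]
      simp only [map_zero, LinearMap.map_zero, LinearMap.zero_apply, hFz0, hFz1, hF'z0, hF'z1, hGz0, hGz1, hGz2, hG'z0, hG'z1, hG'z2]
    have hI51 : (L.tri x3 x4 (F' (G x1 x2 x5) x6 + F' x6 (G x1 x2 x5))) = 0 := by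
      rw [hanti_F' (G x1 x2 x5) x6]
      simp only [map_zero, LinearMap.map_zero, LinearMap.zero_apply, hFz0, hFz1, hF'z0, hF'z1, hGz0, hGz1, hGz2, hG'z0, hG'z1, hG'z2]
    have key : rd45I L (fun a b c d => starOp F G F' G' a b c d + starOp F' G' F G a b c d)
        (fun a b c d e => triOp G G' a b c d e + triOp G' G a b c d e) x1 x2 x3 x4 x5 x6
        = -(rdI L F' G' x1 x2 x5 (G x3 x4 x6)) + (rdI L F' G' x1 x2 x6 (G x3 x4 x5)) + (rdI L F' G' x3 x4 x5 (G x1 x2 x6)) - (rdI L F' G' x3 x4 x6 (G x1 x2 x5)) + (rdI L F' G' x3 (G x1 x2 x4) x5 x6) + (rdI L F' G' (G x1 x2 x3) x4 x5 x6) + (rdII L F' G' x1 x2 x3 x4 (F x5 x6)) + (F x6 (L.tri x3 (G' x1 x2 x4) x5) + F (L.tri x3 (G' x1 x2 x4) x5) x6) - (F (G' x1 x2 x5) (L.tri x3 x4 x6) + F (L.tri x3 x4 x6) (G' x1 x2 x5)) - (F (G' x1 x2 (L.tri x3 x4 x5)) x6 + F x6 (G' x1 x2 (L.tri x3 x4 x5)))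 + (F (G' x3 x4 x5) (L.tri x1 x2 x6) + F (L.tri x1 x2 x6) (G' x3 x4 x5)) + (F (G' x3 x4 (L.tri x1 x2 x5)) x6 + F x6 (G' x3 x4 (L.tri x1 x2 x5))) + (F (G' x3 (L.tri x1 x2 x4) x5) x6 + F x6 (G' x3 (L.tri x1 x2 x4) x5)) + (F (G' (L.tri x1 x2 x3) x4 x5) x6 + F x6 (G' (L.tri x1 x2 x3) x4 x5)) + (F (L.tri (G' x1 x2 x3) x4 x5) x6 + F x6 (L.tri (G' x1 x2 x3) x4 x5)) + (F' x6 (L.tri x3 (G x1 x2 x4) x5) + F' (L.tri x3 (G x1 x2 x4) x5) x6) - (F' (G x1 x2 x5) (L.tri x3 x4 x6) + F' (L.tri x3 x4 x6) (G x1 x2 x5)) - (F' (G x1 x2 (L.tri x3 x4 x5)) x6 + F' x6 (G x1 x2 (L.tri x3 x4 x5))) + (F' (G x3 x4 x5) (L.tri x1 x2 x6) + F' (L.tri x1 x2 x6) (G x3 x4 x5)) + (F' (G x3 x4 (L.tri x1 x2 x5)) x6 + F' x6 (G x3 x4 (L.tri x1 x2 x5))) + (F' (G x3 (L.tri x1 x2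 x4) x5) x6 + F' x6 (G x3 (L.tri x1 x2 x4) x5)) + (F' (G (L.tri x1 x2 x3) x4 x5) x6 + F' x6 (G (L.tri x1 x2 x3) x4 x5)) + (F' (L.tri (G x1 x2 x3) x4 x5) x6 + F' x6 (L.tri (G x1 x2 x3) x4 x5)) + (L.mul (G x1 x2 x5) (G' x3 x4 x6) + L.mul (G' x3 x4 x6) (G x1 x2 x5)) - (L.mul (G x1 x2 x6) (G' x3 x4 x5) + L.mul (G' x3 x4 x5) (G x1 x2 x6)) - (L.mul (G x3 x4 x5) (G' x1 x2 x6) + L.mul (G' x1 x2 x6) (G x3 x4 x5)) + (L.mul (G x3 x4 x6) (G' x1 x2 x5) + L.mul (G' x1 x2 x5) (G x3 x4 x6)) - (L.tri x3 (G x1 x2 x4) (F' x5 x6) + L.tri (G x1 x2 x4) x3 (F' x5 x6)) - (L.tri (G' x1 x2 x4) x3 (F x5 x6) + L.tri x3 (G' x1 x2 x4) (F x5 x6)) - (rdI L F G x1 x2 x5 (G' x3 x4 x6)) + (rdI L F G x1 x2 x6 (G' x3 x4 x5)) + (rdI L F G x3 x4 x5 (G' x1 x2 x6)) - (rdI L F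 G x3 x4 x6 (G' x1 x2 x5)) + (rdI L F G x3 (G' x1 x2 x4) x5 x6) + (rdI L F G (G' x1 x2 x3) x4 x5 x6) + (rdII L F G x1 x2 x3 x4 (F' x5 x6)) - (F x5 (rdII L F' G' x1 x2 x3 x4 x6)) + (F x6 (rdII L F' G' x1 x2 x3 x4 x5)) + (F x5 (L.tri (G' x1 x2 x4) x3 x6 + L.tri x3 (G' x1 x2 x4) x6)) - (F x6 (L.tri x3 (G' x1 x2 x4) x5 + L.tri (G' x1 x2 x4) x3 x5)) + (F' x5 (L.tri x3 (G x1 x2 x4) x6 + L.tri (G x1 x2 x4) x3 x6)) - (F' x6 (L.tri x3 (G x1 x2 x4) x5 + L.tri (G x1 x2 x4) x3 x5)) - (F' x5 (rdII L F G x1 x2 x3 x4 x6)) + (F' x6 (rdII L F G x1 x2 x3 x4 x5)) - (G x1 x2 (rdI L F' G' x3 x4 x5 x6)) + (G x3 x4 (rdI L F' G' x1 x2 x5 x6)) - (G' x1 x2 (rdI L F G x3 x4 x5 x6)) + (G' x3 x4 (rdI L F G x1 x2 x5 x6)) - (L.tri x1 x2 (F (G' x3 x4 x5) x6 + F x6 (G'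 x3 x4 x5))) + (L.tri x3 x4 (F (G' x1 x2 x5) x6 + F x6 (G' x1 x2 x5))) - (L.tri x1 x2 (F' (G x3 x4 x5) x6 + F' x6 (G x3 x4 x5))) + (L.tri x3 x4 (F' (G x1 x2 x5) x6 + F' x6 (G x1 x2 x5))) := by
      simp only [rd45I, rd45II, starOp, triOp, rdI, rdII, map_add, map_sub, map_neg, LinearMap.add_apply, LinearMap.sub_apply, LinearMap.neg_apply, hFa0, hFs0, hFn0, hFa1, hFs1, hFn1, hF'a0, hF's0, hF'n0, hF'a1, hF's1, hF'n1, hGa0, hGs0, hGn0, hGa1, hGs1, hGn1, hGa2, hGs2, hGn2, hG'a0, hG's0, hG'n0, hG'a1, hG's1, hG'n1, hG'a2, hG's2, hG'n2]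
      abel
    rw [key, hI0, hI1, hI2, hI3, hI4, hI5, hI6, hI7, hI8, hI9, hI10, hI11, hI12, hI13, hI14, hI15, hI16, hI17, hI18, hI19, hI20, hI21, hI22, hI23, hI24, hI25, hI26, hI27, hI28, hI29, hI30, hI31, hI32, hI33, hI34, hI35, hI36, hI37, hI38, hI39, hI40, hI41, hI42, hI43, hI44, hI45, hI46, hI47, hI48, hI49, hI50, hI51]
    simp
  · intro x1 x2 x3 x4 x5 x6 x7
    have hII0 : (rdII L F' G' x1 x2 x3 x4 (G x5 x6 x7)) = 0 := hc2' x1 x2 x3 x4 (G x5 x6 x7)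
    have hII1 : (rdII L F' G' x1 x2 x5 x6 (G x3 x4 x7)) = 0 := hc2' x1 x2 x5 x6 (G x3 x4 x7)
    have hII2 : (rdII L F' G' x1 x2 (G x3 x4 x5) x6 x7) = 0 := hc2' x1 x2 (G x3 x4 x5) x6 x7
    have hII3 : (rdII L F' G' x1 x2 (G x3 x4 x6) x5 x7) = 0 := hc2' x1 x2 (G x3 x4 x6) x5 x7
    have hII4 : (rdII L F' G' x3 x4 x5 x6 (G x1 x2 x7)) = 0 := hc2' x3 x4 x5 x6 (G x1 x2 x7)
    have hII5 : (rdII L F' G' x3 x4 (G x1 x2 x5) x6 x7) = 0 := hc2' x3 x4 (G x1 x2 x5) x6 x7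
    have hII6 : (rdII L F' G' x3 x4 (G x1 x2 x6) x5 x7) = 0 := hc2' x3 x4 (G x1 x2 x6) x5 x7
    have hII7 : (rdII L F' G' (G x1 x2 x3) x4 x5 x6 x7) = 0 := hc2' (G x1 x2 x3) x4 x5 x6 x7
    have hII8 : (rdII L F' G' (G x1 x2 x4) x3 x5 x6 x7) = 0 := hc2' (G x1 x2 x4) x3 x5 x6 x7
    have hII9 : (G x3 (G' x1 x2 x4) (L.tri x5 x6 x7) + G (G' x1 x2 x4) x3 (L.tri x5 x6 x7)) = 0 := hanti_G x3 (G' x1 x2 x4) (L.tri x5 x6 x7)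
    have hII10 : (G x5 (G' x1 x2 x6) (L.tri x3 x4 x7) + G (G' x1 x2 x6) x5 (L.tri x3 x4 x7)) = 0 := hanti_G x5 (G' x1 x2 x6) (L.tri x3 x4 x7)
    have hII11 : (G x5 (G' x1 x2 (L.tri x3 x4 x6)) x7 + G (G' x1 x2 (L.tri x3 x4 x6)) x5 x7) = 0 := hanti_G x5 (G' x1 x2 (L.tri x3 x4 x6)) x7
    have hII12 : (G x5 (G' x1 (L.tri x3 x4 x2) x6) x7 + G (G' x1 (L.tri x3 x4 x2) x6) x5 x7) = 0 := hanti_G x5 (G' x1 (L.tri x3 x4 x2) x6) x7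
    have hII13 : (G x5 (G' x3 x4 x6) (L.tri x1 x2 x7) + G (G' x3 x4 x6) x5 (L.tri x1 x2 x7)) = 0 := hanti_G x5 (G' x3 x4 x6) (L.tri x1 x2 x7)
    have hII14 : (G x5 (G' x3 x4 (L.tri x1 x2 x6)) x7 + G (G' x3 x4 (L.tri x1 x2 x6)) x5 x7) = 0 := hanti_G x5 (G' x3 x4 (L.tri x1 x2 x6)) x7
    have hII15 : (G x5 (G' (L.tri x3 x4 x1) x2 x6) x7 + G (G' (L.tri x3 x4 x1) x2 x6) x5 x7) = 0 := hanti_G x5 (G' (L.tri x3 x4 x1) x2 x6) x7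
    have hII16 : (G x5 (L.tri (G' x3 x4 x1) x2 x6) x7 + G (L.tri (G' x3 x4 x1) x2 x6) x5 x7) = 0 := hanti_G x5 (L.tri (G' x3 x4 x1) x2 x6) x7
    have hII17 : (G x5 (L.tri (G' x3 x4 x2) x1 x6) x7 + G (L.tri (G' x3 x4 x2) x1 x6) x5 x7) = 0 := hanti_G x5 (L.tri (G' x3 x4 x2) x1 x6) x7
    have hII18 : (G (L.tri x1 x2 x5) (G' x3 x4 x6) x7 + G (G' x3 x4 x6) (L.tri x1 x2 x5) x7) = 0 := hanti_G (L.tri x1 x2 x5) (G' x3 x4 x6) x7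
    have hII19 : (G (L.tri x3 x4 x5) (G' x1 x2 x6) x7 + G (G' x1 x2 x6) (L.tri x3 x4 x5) x7) = 0 := hanti_G (L.tri x3 x4 x5) (G' x1 x2 x6) x7
    have hII20 : (G' x3 (G x1 x2 x4) (L.tri x5 x6 x7) + G' (G x1 x2 x4) x3 (L.tri x5 x6 x7)) = 0 := hanti_G' x3 (G x1 x2 x4) (L.tri x5 x6 x7)
    have hII21 : (G' x5 (G x1 x2 x6) (L.tri x3 x4 x7) + G' (G x1 x2 x6) x5 (L.tri x3 x4 x7)) = 0 := hanti_G' x5 (G x1 x2 x6) (L.tri x3 x4 x7)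
    have hII22 : (G' x5 (G x3 x4 x6) (L.tri x1 x2 x7) + G' (G x3 x4 x6) x5 (L.tri x1 x2 x7)) = 0 := hanti_G' x5 (G x3 x4 x6) (L.tri x1 x2 x7)
    have hII23 : (G' (L.tri x1 x2 x5) (G x3 x4 x6) x7 + G' (G x3 x4 x6) (L.tri x1 x2 x5) x7) = 0 := hanti_G' (L.tri x1 x2 x5) (G x3 x4 x6) x7
    have hII24 : (G' (L.tri x1 x2 (G x3 x4 x6)) x5 x7 + G' x5 (L.tri x1 x2 (G x3 x4 x6)) x7) = 0 := hanti_G' (L.tri x1 x2 (G x3 x4 x6)) x5 x7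
    have hII25 : (G' (L.tri x3 x4 x5) (G x1 x2 x6) x7 + G' (G x1 x2 x6) (L.tri x3 x4 x5) x7) = 0 := hanti_G' (L.tri x3 x4 x5) (G x1 x2 x6) x7
    have hII26 : (G' (L.tri x3 x4 (G x1 x2 x6)) x5 x7 + G' x5 (L.tri x3 x4 (G x1 x2 x6)) x7) = 0 := hanti_G' (L.tri x3 x4 (G x1 x2 x6)) x5 x7
    have hII27 : (L.tri (G x1 x2 x6) (G' x3 x4 x5) x7 + L.tri (G' x3 x4 x5) (G x1 x2 x6) x7) = 0 := hanti_t (G x1 x2 x6) (G' x3 x4 x5) x7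
    have hII28 : (L.tri (G x3 x4 x6) (G' x1 x2 x5) x7 + L.tri (G' x1 x2 x5) (G x3 x4 x6) x7) = 0 := hanti_t (G x3 x4 x6) (G' x1 x2 x5) x7
    have hII29 : (L.tri (G' x1 x2 x6) (G x3 x4 x5) x7 + L.tri (G x3 x4 x5) (G' x1 x2 x6) x7) = 0 := hanti_t (G' x1 x2 x6) (G x3 x4 x5) x7
    have hII30 : (L.tri (G' x3 x4 x6) (G x1 x2 x5) x7 + L.tri (G x1 x2 x5) (G' x3 x4 x6) x7) = 0 := hanti_t (G' x3 x4 x6) (G x1 x2 x5) x7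
    have hII31 : (rdII L F G x1 x2 x3 x4 (G' x5 x6 x7)) = 0 := hc2 x1 x2 x3 x4 (G' x5 x6 x7)
    have hII32 : (rdII L F G x1 x2 x5 x6 (G' x3 x4 x7)) = 0 := hc2 x1 x2 x5 x6 (G' x3 x4 x7)
    have hII33 : (rdII L F G x1 x2 (G' x3 x4 x5) x6 x7) = 0 := hc2 x1 x2 (G' x3 x4 x5) x6 x7
    have hII34 : (rdII L F G x1 x2 (G' x3 x4 x6) x5 x7) = 0 := hc2 x1 x2 (G' x3 x4 x6) x5 x7
    have hII35 : (rdII L F G x3 x4 x5 x6 (G' x1 x2 x7)) = 0 := hc2 x3 x4 x5 x6 (G' x1 x2 x7)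
    have hII36 : (rdII L F G x3 x4 (G' x1 x2 x5) x6 x7) = 0 := hc2 x3 x4 (G' x1 x2 x5) x6 x7
    have hII37 : (rdII L F G x3 x4 (G' x1 x2 x6) x5 x7) = 0 := hc2 x3 x4 (G' x1 x2 x6) x5 x7
    have hII38 : (rdII L F G (G' x1 x2 x3) x4 x5 x6 x7) = 0 := hc2 (G' x1 x2 x3) x4 x5 x6 x7
    have hII39 : (rdII L F G (G' x1 x2 x4) x3 x5 x6 x7) = 0 := hc2 (G' x1 x2 x4) x3 x5 x6 x7
    have hII40 : (G (rdII L F' G' x3 x4 x1 x2 x6) x5 x7) = 0 := by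
      rw [hc2' x3 x4 x1 x2 x6]
      simp only [map_zero, LinearMap.map_zero, LinearMap.zero_apply, hFz0, hFz1, hF'z0, hF'z1, hGz0, hGz1, hGz2, hG'z0, hG'z1, hG'z2]
    have hII41 : (G (rdII L F' G' x1 x2 x3 x4 x5) x6 x7) = 0 := by
      rw [hc2' x1 x2 x3 x4 x5]
      simp only [map_zero, LinearMap.map_zero, LinearMap.zero_apply, hFz0, hFz1, hF'z0, hF'z1, hGz0, hGz1, hGz2, hG'z0, hG'z1, hG'z2]
    have hII42 : (G x5 (rdII L F' G' x1 x2 x3 x4 x6) x7) = 0 := by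
      rw [hc2' x1 x2 x3 x4 x6]
      simp only [map_zero, LinearMap.map_zero, LinearMap.zero_apply, hFz0, hFz1, hF'z0, hF'z1, hGz0, hGz1, hGz2, hG'z0, hG'z1, hG'z2]
    have hII43 : (G x5 (rdII L F' G' x3 x4 x1 x2 x6) x7) = 0 := by
      rw [hc2' x3 x4 x1 x2 x6]
      simp only [map_zero, LinearMap.map_zero, LinearMap.zero_apply, hFz0, hFz1, hF'z0, hF'z1, hGz0, hGz1, hGz2, hG'z0, hG'z1, hG'z2]
    have hII44 : (G x1 x2 (rdII L F' G' x3 x4 x5 x6 x7)) = 0 := by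
      rw [hc2' x3 x4 x5 x6 x7]
      simp only [map_zero, LinearMap.map_zero, LinearMap.zero_apply, hFz0, hFz1, hF'z0, hF'z1, hGz0, hGz1, hGz2, hG'z0, hG'z1, hG'z2]
    have hII45 : (G x3 x4 (rdII L F' G' x1 x2 x5 x6 x7)) = 0 := by
      rw [hc2' x1 x2 x5 x6 x7]
      simp only [map_zero, LinearMap.map_zero, LinearMap.zero_apply, hFz0, hFz1, hF'z0, hF'z1, hGz0, hGz1, hGz2, hG'z0, hG'z1, hG'z2]
    have hII46 : (G x5 x6 (rdII L F' G' x1 x2 x3 x4 x7)) = 0 := by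
      rw [hc2' x1 x2 x3 x4 x7]
      simp only [map_zero, LinearMap.map_zero, LinearMap.zero_apply, hFz0, hFz1, hF'z0, hF'z1, hGz0, hGz1, hGz2, hG'z0, hG'z1, hG'z2]
    have hII47 : (G' (rdII L F G x1 x2 x3 x4 x5) x6 x7) = 0 := by
      rw [hc2 x1 x2 x3 x4 x5]
      simp only [map_zero, LinearMap.map_zero, LinearMap.zero_apply, hFz0, hFz1, hF'z0, hF'z1, hGz0, hGz1, hGz2, hG'z0, hG'z1, hG'z2]
    have hII48 : (G' x5 (rdII L F G x1 x2 x3 x4 x6) x7) = 0 := by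
      rw [hc2 x1 x2 x3 x4 x6]
      simp only [map_zero, LinearMap.map_zero, LinearMap.zero_apply, hFz0, hFz1, hF'z0, hF'z1, hGz0, hGz1, hGz2, hG'z0, hG'z1, hG'z2]
    have hII49 : (G' x1 x2 (rdII L F G x3 x4 x5 x6 x7)) = 0 := by
      rw [hc2 x3 x4 x5 x6 x7]
      simp only [map_zero, LinearMap.map_zero, LinearMap.zero_apply, hFz0, hFz1, hF'z0, hF'z1, hGz0, hGz1, hGz2, hG'z0, hG'z1, hG'z2]
    have hII50 : (G' x3 x4 (rdII L F G x1 x2 x5 x6 x7)) = 0 := by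
      rw [hc2 x1 x2 x5 x6 x7]
      simp only [map_zero, LinearMap.map_zero, LinearMap.zero_apply, hFz0, hFz1, hF'z0, hF'z1, hGz0, hGz1, hGz2, hG'z0, hG'z1, hG'z2]
    have hII51 : (G' x5 x6 (rdII L F G x1 x2 x3 x4 x7)) = 0 := by
      rw [hc2 x1 x2 x3 x4 x7]
      simp only [map_zero, LinearMap.map_zero, LinearMap.zero_apply, hFz0, hFz1, hF'z0, hF'z1, hGz0, hGz1, hGz2, hG'z0, hG'z1, hG'z2]
    have hII52 : (L.tri (G x3 (G' x1 x2 x4) x6 + G (G' x1 x2 x4) x3 x6) x5 x7) = 0 := by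
      rw [hanti_G x3 (G' x1 x2 x4) x6]
      simp only [map_zero, LinearMap.map_zero, LinearMap.zero_apply, hFz0, hFz1, hF'z0, hF'z1, hGz0, hGz1, hGz2, hG'z0, hG'z1, hG'z2]
    have hII53 : (L.tri (G x3 (G' x1 x2 x4) x5 + G (G' x1 x2 x4) x3 x5) x6 x7) = 0 := by
      rw [hanti_G x3 (G' x1 x2 x4) x5]
      simp only [map_zero, LinearMap.map_zero, LinearMap.zero_apply, hFz0, hFz1, hF'z0, hF'z1, hGz0, hGz1, hGz2, hG'z0, hG'z1, hG'z2]
    have hII54 : (L.tri (G' x3 (G x1 x2 x4) x6 + G' (G x1 x2 x4) x3 x6) x5 x7) = 0 := by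
      rw [hanti_G' x3 (G x1 x2 x4) x6]
      simp only [map_zero, LinearMap.map_zero, LinearMap.zero_apply, hFz0, hFz1, hF'z0, hF'z1, hGz0, hGz1, hGz2, hG'z0, hG'z1, hG'z2]
    have hII55 : (L.tri (G' x3 (G x1 x2 x4) x5 + G' (G x1 x2 x4) x3 x5) x6 x7) = 0 := by
      rw [hanti_G' x3 (G x1 x2 x4) x5]
      simp only [map_zero, LinearMap.map_zero, LinearMap.zero_apply, hFz0, hFz1, hF'z0, hF'z1, hGz0, hGz1, hGz2, hG'z0, hG'z1, hG'z2]
    have hII56 : (L.tri x1 x2 (G x5 (G' x3 x4 x6) x7 + G (G' x3 x4 x6) x5 x7)) = 0 := by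
      rw [hanti_G x5 (G' x3 x4 x6) x7]
      simp only [map_zero, LinearMap.map_zero, LinearMap.zero_apply, hFz0, hFz1, hF'z0, hF'z1, hGz0, hGz1, hGz2, hG'z0, hG'z1, hG'z2]
    have hII57 : (L.tri x3 x4 (G x5 (G' x1 x2 x6) x7 + G (G' x1 x2 x6) x5 x7)) = 0 := by
      rw [hanti_G x5 (G' x1 x2 x6) x7]
      simp only [map_zero, LinearMap.map_zero, LinearMap.zero_apply, hFz0, hFz1, hF'z0, hF'z1, hGz0, hGz1, hGz2, hG'z0, hG'z1, hG'z2]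
    have hII58 : (L.tri x5 x6 (G x3 (G' x1 x2 x4) x7 + G (G' x1 x2 x4) x3 x7)) = 0 := by
      rw [hanti_G x3 (G' x1 x2 x4) x7]
      simp only [map_zero, LinearMap.map_zero, LinearMap.zero_apply, hFz0, hFz1, hF'z0, hF'z1, hGz0, hGz1, hGz2, hG'z0, hG'z1, hG'z2]
    have hII59 : (L.tri x1 x2 (G' x5 (G x3 x4 x6) x7 + G' (G x3 x4 x6) x5 x7)) = 0 := by
      rw [hanti_G' x5 (G x3 x4 x6) x7]
      simp only [map_zero, LinearMap.map_zero, LinearMap.zero_apply, hFz0, hFz1, hF'z0, hF'z1, hGz0, hGz1, hGz2, hG'z0, hG'z1, hG'z2]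
    have hII60 : (L.tri x3 x4 (G' x5 (G x1 x2 x6) x7 + G' (G x1 x2 x6) x5 x7)) = 0 := by
      rw [hanti_G' x5 (G x1 x2 x6) x7]
      simp only [map_zero, LinearMap.map_zero, LinearMap.zero_apply, hFz0, hFz1, hF'z0, hF'z1, hGz0, hGz1, hGz2, hG'z0, hG'z1, hG'z2]
    have hII61 : (L.tri x5 x6 (G' x3 (G x1 x2 x4) x7 + G' (G x1 x2 x4) x3 x7)) = 0 := by
      rw [hanti_G' x3 (G x1 x2 x4) x7]
      simp only [map_zero, LinearMap.map_zero, LinearMap.zero_apply, hFz0, hFz1, hF'z0, hF'z1, hGz0, hGz1, hGz2, hG'z0, hG'z1, hG'z2]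
    have key : rd45II L (fun a b c d => starOp F G F' G' a b c d + starOp F' G' F G a b c d)
        (fun a b c d e => triOp G G' a b c d e + triOp G' G a b c d e) x1 x2 x3 x4 x5 x6 x7
        = (rdII L F' G' x1 x2 x3 x4 (G x5 x6 x7)) - (rdII L F' G' x1 x2 x5 x6 (G x3 x4 x7)) - (rdII L F' G' x1 x2 (G x3 x4 x5) x6 x7) + (rdII L F' G' x1 x2 (G x3 x4 x6) x5 x7) + (rdII L F' G' x3 x4 x5 x6 (G x1 x2 x7)) + (rdII L F' G' x3 x4 (G x1 x2 x5) x6 x7) - (rdII L F' G' x3 x4 (G x1 x2 x6) x5 x7) + (rdII L F' G' (G x1 x2 x3) x4 x5 x6 x7) - (rdII L F' G' (G x1 x2 x4) x3 x5 x6 x7) + (G x3 (G' x1 x2 x4) (L.tri x5 x6 x7) + G (G' x1 x2 x4) x3 (L.tri x5 x6 x7)) - (G x5 (G' x1 x2 x6) (L.tri x3 x4 x7) + G (G' x1 x2 x6) x5 (L.tri x3 x4 x7)) - (G x5 (G' x1 x2 (L.tri x3 x4 x6)) x7 + G (G' x1 x2 (L.tri x3 x4 x6)) x5 x7) - (G x5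 (G' x1 (L.tri x3 x4 x2) x6) x7 + G (G' x1 (L.tri x3 x4 x2) x6) x5 x7) + (G x5 (G' x3 x4 x6) (L.tri x1 x2 x7) + G (G' x3 x4 x6) x5 (L.tri x1 x2 x7)) + (G x5 (G' x3 x4 (L.tri x1 x2 x6)) x7 + G (G' x3 x4 (L.tri x1 x2 x6)) x5 x7) - (G x5 (G' (L.tri x3 x4 x1) x2 x6) x7 + G (G' (L.tri x3 x4 x1) x2 x6) x5 x7) - (G x5 (L.tri (G' x3 x4 x1) x2 x6) x7 + G (L.tri (G' x3 x4 x1) x2 x6) x5 x7) + (G x5 (L.tri (G' x3 x4 x2) x1 x6) x7 + G (L.tri (G' x3 x4 x2) x1 x6) x5 x7) + (G (L.tri x1 x2 x5) (G' x3 x4 x6) x7 + G (G' x3 x4 x6) (L.tri x1 x2 x5) x7) - (G (L.tri x3 x4 x5) (G' x1 x2 x6) x7 + G (G' x1 x2 x6) (L.tri x3 x4 x5) x7) + (G' x3 (G x1 x2 x4) (L.tri x5 x6 x7) + G' (G x1 x2 x4) x3 (L.tri x5 x6 x7)) - (G' x5 (G x1 x2 x6) (L.tri x3 x4 x7) + G'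 (G x1 x2 x6) x5 (L.tri x3 x4 x7)) + (G' x5 (G x3 x4 x6) (L.tri x1 x2 x7) + G' (G x3 x4 x6) x5 (L.tri x1 x2 x7)) + (G' (L.tri x1 x2 x5) (G x3 x4 x6) x7 + G' (G x3 x4 x6) (L.tri x1 x2 x5) x7) + (G' (L.tri x1 x2 (G x3 x4 x6)) x5 x7 + G' x5 (L.tri x1 x2 (G x3 x4 x6)) x7) - (G' (L.tri x3 x4 x5) (G x1 x2 x6) x7 + G' (G x1 x2 x6) (L.tri x3 x4 x5) x7) - (G' (L.tri x3 x4 (G x1 x2 x6)) x5 x7 + G' x5 (L.tri x3 x4 (G x1 x2 x6)) x7) + (L.tri (G x1 x2 x6) (G' x3 x4 x5) x7 + L.tri (G' x3 x4 x5) (G x1 x2 x6) x7) - (L.tri (G x3 x4 x6) (G' x1 x2 x5) x7 + L.tri (G' x1 x2 x5) (G x3 x4 x6) x7) + (L.tri (G' x1 x2 x6) (G x3 x4 x5) x7 + L.tri (G x3 x4 x5) (G' x1 x2 x6) x7) - (L.tri (G' x3 x4 x6) (G x1 x2 x5) x7 + L.tri (G x1 x2 x5) (G' x3 x4 x6) x7)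 + (rdII L F G x1 x2 x3 x4 (G' x5 x6 x7)) - (rdII L F G x1 x2 x5 x6 (G' x3 x4 x7)) - (rdII L F G x1 x2 (G' x3 x4 x5) x6 x7) + (rdII L F G x1 x2 (G' x3 x4 x6) x5 x7) + (rdII L F G x3 x4 x5 x6 (G' x1 x2 x7)) + (rdII L F G x3 x4 (G' x1 x2 x5) x6 x7) - (rdII L F G x3 x4 (G' x1 x2 x6) x5 x7) + (rdII L F G (G' x1 x2 x3) x4 x5 x6 x7) - (rdII L F G (G' x1 x2 x4) x3 x5 x6 x7) - (G (rdII L F' G' x3 x4 x1 x2 x6) x5 x7) - (G (rdII L F' G' x1 x2 x3 x4 x5) x6 x7) - (G x5 (rdII L F' G' x1 x2 x3 x4 x6) x7) - (G x5 (rdII L F' G' x3 x4 x1 x2 x6) x7) - (G x1 x2 (rdII L F' G' x3 x4 x5 x6 x7)) + (G x3 x4 (rdII L F' G' x1 x2 x5 x6 x7)) - (G x5 x6 (rdII L F' G' x1 x2 x3 x4 x7)) - (G' (rdII L F G x1 x2 x3 x4 x5) x6 x7) - (G' x5 (rdII L F G x1 x2 x3 x4 x6) x7) - (G' x1 x2 (rdII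 L F G x3 x4 x5 x6 x7)) + (G' x3 x4 (rdII L F G x1 x2 x5 x6 x7)) - (G' x5 x6 (rdII L F G x1 x2 x3 x4 x7)) + (L.tri (G x3 (G' x1 x2 x4) x6 + G (G' x1 x2 x4) x3 x6) x5 x7) - (L.tri (G x3 (G' x1 x2 x4) x5 + G (G' x1 x2 x4) x3 x5) x6 x7) + (L.tri (G' x3 (G x1 x2 x4) x6 + G' (G x1 x2 x4) x3 x6) x5 x7) - (L.tri (G' x3 (G x1 x2 x4) x5 + G' (G x1 x2 x4) x3 x5) x6 x7) - (L.tri x1 x2 (G x5 (G' x3 x4 x6) x7 + G (G' x3 x4 x6) x5 x7)) + (L.tri x3 x4 (G x5 (G' x1 x2 x6) x7 + G (G' x1 x2 x6) x5 x7)) - (L.tri x5 x6 (G x3 (G' x1 x2 x4) x7 + G (G' x1 x2 x4) x3 x7)) - (L.tri x1 x2 (G' x5 (G x3 x4 x6) x7 + G' (G x3 x4 x6) x5 x7)) + (L.tri x3 x4 (G' x5 (G x1 x2 x6) x7 + G' (G x1 x2 x6) x5 x7)) - (L.tri x5 x6 (G' x3 (G x1 x2 x4) x7 + G' (G x1 x2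 x4) x3 x7)) := by
      simp only [rd45I, rd45II, starOp, triOp, rdI, rdII, map_add, map_sub, map_neg, LinearMap.add_apply, LinearMap.sub_apply, LinearMap.neg_apply, hFa0, hFs0, hFn0, hFa1, hFs1, hFn1, hF'a0, hF's0, hF'n0, hF'a1, hF's1, hF'n1, hGa0, hGs0, hGn0, hGa1, hGs1, hGn1, hGa2, hGs2, hGn2, hG'a0, hG's0, hG'n0, hG'a1, hG's1, hG'n1, hG'a2, hG's2, hG'n2]
      abel_nf
    rw [key, hII0, hII1, hII2, hII3, hII4, hII5, hII6, hII7, hII8, hII9, hII10, hII11, hII12, hII13, hII14, hII15, hII16, hII17, hII18, hII19, hII20, hII21, hII22, hII23, hII24, hII25, hII26, hII27, hII28, hII29, hII30, hII31, hII32, hII33, hII34, hII35, hII36, hII37, hII38, hII39, hII40, hII41, hII42, hII43, hII44, hII45, hII46, hII47, hII48, hII49, hII50, hII51, hII52, hII53, hII54, hII55, hII56, hII57, hII58, hII59, hII60, hII61]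
    simp
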